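/- Consider SEMO or GSEMO on OneMinMax with a parent-selection mechanism such that, whenever the population does not cover the whole Pareto front, a good individual is selected with probability at least p_good. Then the expected number of iterations until the population covers the whole Pareto front is at most O((n log n)/p_good); explicitly, it is at most 2en(ln n + 1)/p_good plus lower-order terms. -/

import Mathlib

noncomputable section
open scoped ENNReal
attribute [local instance] Classical.propDecidable

namespace EMO


/-- A bit string of length `n`. -/
abbrev BitString (n : ℕ) := Fin n → Bool

/-- Number of one-bits. -/
def onesCount {n : ℕ} (x : BitString n) : ℕ :=
  (Finset.univ.filter fun i => x i = true).card

def allOnes (n : ℕ) : BitString n := fun _ => true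
def allZeros (n : ℕ) : BitString n := fun _ => false

/-- The bi-objective function OneMinMax. -/
def OneMinMax {n : ℕ} (x : BitString n) : ℤ × ℤ :=
  ((onesCount x : ℤ), (n : ℤ) - (onesCount x : ℤ))

/-- Number of leading ones. -/
def leadingOnes {n : ℕ} (x : BitString n) : ℕ :=
  (Finset.univ.filter fun i : Fin n => ∀ j : Fin n, j ≤ i → x j = true).card

/-- Number of trailing zeros. -/
def trailingZeros {n : ℕ} (x : BitString n) : ℕ :=
  (Finset.univ.filter fun i : Fin n => ∀ j : Fin n, i ≤ j → x j = false).card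

/-- The bi-objective function LOTZ. -/
def LOTZ {n : ℕ} (x : BitString n) : ℤ × ℤ :=
  ((leadingOnes x : ℤ), (trailingZeros x : ℤ))

/-- `y` dominates `x` (maximisation). -/
def dominates {n : ℕ} (f : BitString n → ℤ × ℤ) (y x : BitString n) : Prop :=
  (f x).1 ≤ (f y).1 ∧ (f x).2 ≤ (f y).2 ∧ f x ≠ f y

/-- `y` weakly dominates `x` (maximisation). -/
def weaklyDominates {n : ℕ} (f : BitString n → ℤ × ℤ) (y x : BitString n) : Prop :=
  (f x).1 ≤ (f y).1 ∧ (f x).2 ≤ (f y).2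

/-- Pareto optimality. -/
def paretoOptimal {n : ℕ} (f : BitString n → ℤ × ℤ) (x : BitString n) : Prop :=
  ¬ ∃ y : BitString n, dominates f y x

/-- A population of mutually non-dominated points. -/
def mutuallyNonDominated {n : ℕ} (f : BitString n → ℤ × ℤ)
    (P : Finset (BitString n)) : Prop :=
  ∀ x ∈ P, ∀ y ∈ P, ¬ dominates f y x

/-- Flip bit `i` of `x`. -/
def flipBit {n : ℕ} (x : BitString n) (i : Fin n) : BitString n :=
  Function.update x i (!x i)

/-- `y` is a Hamming neighbour of `x`. -/
def hammingNeighbour {n : ℕ} (x y : BitString n) : Prop :=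
  ∃ i : Fin n, y = flipBit x i

/-- `x` is good relative to population `P`: it is Pareto optimal and has a Pareto-optimal
Hamming neighbour whose objective vector is not attained by any member of `P`. -/
def isGood {n : ℕ} (f : BitString n → ℤ × ℤ) (P : Finset (BitString n))
    (x : BitString n) : Prop :=
  paretoOptimal f x ∧
    ∃ y : BitString n, hammingNeighbour x y ∧ paretoOptimal f y ∧ ∀ z ∈ P, f z ≠ f y

/-- `x` is bad relative to population `P`. -/
def isBad {n : ℕ} (f : BitString n → ℤ × ℤ) (P : Finset (BitString n))
    (x : BitString n) : Prop :=
  paretoOptimal f x ∧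
    ¬ ∃ y : BitString n, hammingNeighbour x y ∧ paretoOptimal f y ∧ ∀ z ∈ P, f z ≠ f y

/-- `P` covers the whole Pareto front of `f`. -/
def coversFront {n : ℕ} (f : BitString n → ℤ × ℤ) (P : Finset (BitString n)) : Prop :=
  ∀ x : BitString n, paretoOptimal f x → ∃ z ∈ P, f z = f x

/-- The hypervolume contribution of `x` to `P` (for a population of mutually
non-dominated points, with reference point `r`). -/
def HVC {n : ℕ} (f : BitString n → ℤ × ℤ) (r : ℤ × ℤ) (x : BitString n)
    (P : Finset (BitString n)) : ℤ :=
  ((f x).1 - (((P.filter fun z => (f z).1 < (f x).1).image fun z => (f z).1).max.unbotD r.1)) *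
  ((f x).2 - (((P.filter fun z => (f z).2 < (f x).2).image fun z => (f z).2).max.unbotD r.2))

/-- Crowding distance of `x` in `P` with respect to a single objective `g`: infinite for the
boundary points, and otherwise the normalised difference between successor and predecessor. -/
def CDCobj {n : ℕ} (g : BitString n → ℤ) (x : BitString n)
    (P : Finset (BitString n)) : ℝ≥0∞ :=
  if (∀ z ∈ P, g x ≤ g z) ∨ (∀ z ∈ P, g z ≤ g x) then ⊤
  else
    (((((P.filter fun z => g x < g z).image g).min.untopD 0 -
        (((P.filter fun z => g z < g x).image g).max.unbotD 0)).toNat : ℝ≥0∞)) /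
      ((((P.image g).max.unbotD 0 - ((P.image g).min.untopD 0)).toNat : ℝ≥0∞))

/-- The crowding distance contribution of `x` to `P`. -/
def CDC {n : ℕ} (f : BitString n → ℤ × ℤ) (x : BitString n)
    (P : Finset (BitString n)) : ℝ≥0∞ :=
  CDCobj (fun z => (f z).1) x P + CDCobj (fun z => (f z).2) x P

/-- A diversity measure `c` is diversity-favouring on `S`. -/
def diversityFavouring {n : ℕ} {α : Type*} [Preorder α] (f : BitString n → ℤ × ℤ)
    (c : BitString n → Finset (BitString n) → α) (S : Set (BitString n)) : Prop :=
  ∀ P : Finset (BitString n), mutuallyNonDominated f P →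
    ∀ x ∈ P, ∀ y ∈ P, x ∈ S → y ∈ S → isBad f P x → isGood f P y → c x P < c y P

/-- The default bit string (used only to make selection kernels total). -/
def defaultBS (n : ℕ) : BitString n := fun _ => false

/-- Local mutation: flip a single uniformly random bit. -/
def localMutation {n : ℕ} (hn : 0 < n) (x : BitString n) : PMF (BitString n) :=
  haveI : Nonempty (Fin n) := ⟨⟨0, hn⟩⟩
  (PMF.uniformOfFintype (Fin n)).map (flipBit x)

/-- A Bernoulli coin with success probability `1/n` (for `n ≥ 1`). -/
def bitFlipCoin (n : ℕ) : PMF Bool :=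
  PMF.ofFintype (fun b => cond b (min ((n : ℝ≥0∞))⁻¹ 1) (1 - min ((n : ℝ≥0∞))⁻¹ 1))
    (by rw [Fintype.sum_bool]; simp only [cond_true, cond_false]
        exact add_tsub_cancel_of_le (min_le_right _ _))

/-- Global (standard bit) mutation: flip each bit independently with probability `1/n`. -/
def globalMutationAux {n : ℕ} : List (Fin n) → BitString n → PMF (BitString n)
  | [], x => PMF.pure x
  | i :: is, x => (bitFlipCoin n).bind fun b =>
      globalMutationAux is (if b then flipBit x i else x)

def globalMutation {n : ℕ} (x : BitString n) : PMF (BitString n) :=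
  globalMutationAux (List.finRange n) x

/-- Survival selection: if `s'` is not dominated by any member of `P`, add `s'` to `P` and
remove all members weakly dominated by `s'`. -/
def updatePop {n : ℕ} (f : BitString n → ℤ × ℤ) (P : Finset (BitString n))
    (s' : BitString n) : Finset (BitString n) :=
  if ∃ z ∈ P, dominates f z s' then P
  else insert s' (P.filter fun z => ¬ weaklyDominates f s' z)

/-- One iteration of (G)SEMO with parent-selection kernel `select` and mutation `mutate`. -/
def step {n : ℕ} (f : BitString n → ℤ × ℤ)
    (select : Finset (BitString n) → PMF (BitString n))
    (mutate : BitString n → PMF (BitString n))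
    (P : Finset (BitString n)) : PMF (Finset (BitString n)) :=
  (select P).bind fun s => (mutate s).map fun s' => updatePop f P s'

/-- The L-dominant attribute `L(x) = LO(x) + TZ(x)`. -/
def Ldom {n : ℕ} (x : BitString n) : ℕ := leadingOnes x + trailingZeros x

/-- The subpopulation of points with maximum L-dominant attribute. -/
def maxLSub {n : ℕ} (P : Finset (BitString n)) : Finset (BitString n) :=
  P.filter fun x => ∀ z ∈ P, Ldom z ≤ Ldom x

/-- One iteration of the modified GSEMO: parent selection (and the diversity contribution)
is restricted to the subpopulation of points with maximum L-dominant attribute. -/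
def stepMod {n : ℕ} (f : BitString n → ℤ × ℤ)
    (select : Finset (BitString n) → PMF (BitString n))
    (mutate : BitString n → PMF (BitString n))
    (P : Finset (BitString n)) : PMF (Finset (BitString n)) :=
  (select (maxLSub P)).bind fun s => (mutate s).map fun s' => updatePop f P s'

/-- Initial population: a single uniformly random bit string. -/
def initDist (n : ℕ) : PMF (Finset (BitString n)) :=
  (PMF.uniformOfFintype (BitString n)).map fun x => {x}

/-- Distribution of the population after `t` iterations. -/
def stateDist {S : Type*} (init : PMF S) (st : S → PMF S) : ℕ → PMF S
  | 0 => init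
  | t + 1 => (stateDist init st t).bind st

/-- Expected number of iterations until an (absorbing) goal predicate is reached,
expressed as `∑ₜ Pr[goal not yet reached at time t]`. -/
def expectedRuntime {S : Type*} (init : PMF S) (st : S → PMF S) (goal : S → Prop) : ℝ≥0∞ :=
  ∑' t : ℕ, (stateDist init st t).toOuterMeasure {s | ¬ goal s}

/-- Uniform parent selection. -/
def uniformSelect {n : ℕ} (P : Finset (BitString n)) : PMF (BitString n) :=
  if h : P.Nonempty then PMF.uniformOfFinset P h else PMF.pure (defaultBS n)

/-- Highest Diversity Contribution (HDC) parent selection: select an individual with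
maximum diversity contribution, ties broken uniformly at random. -/
def HDCSelect {n : ℕ} {α : Type*} [LinearOrder α]
    (c : BitString n → Finset (BitString n) → α)
    (P : Finset (BitString n)) : PMF (BitString n) :=
  if h : P.Nonempty then
    PMF.uniformOfFinset (P.filter fun x => ∀ y ∈ P, c y P ≤ c x P)
      (by
        obtain ⟨b, hb, hmax⟩ := P.exists_max_image (fun x => c x P) h
        exact ⟨b, Finset.mem_filter.mpr ⟨hb, hmax⟩⟩)
  else PMF.pure (defaultBS n)

/-- Non-Minimum Uniform at Random (NMUAR) parent selection: select uniformly at random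
among all individuals whose diversity contribution is not minimal (from the whole
population if all contributions are equal). -/
def NMUARSelect {n : ℕ} {α : Type*} [LinearOrder α]
    (c : BitString n → Finset (BitString n) → α)
    (P : Finset (BitString n)) : PMF (BitString n) :=
  if h : P.Nonempty then
    if hQ : (P.filter fun x => ∃ y ∈ P, c y P < c x P).Nonempty then
      PMF.uniformOfFinset _ hQ
    else PMF.uniformOfFinset P h
  else PMF.pure (defaultBS n)

/-- Tournament selection with tournament size `μ = |P|`: draw `μ` individuals uniformly at
random with replacement from `P` and select one with the highest diversity contribution
among the drawn multiset (ties broken uniformly at random). -/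
def tournamentSelect {n : ℕ} {α : Type*} [LinearOrder α]
    (c : BitString n → Finset (BitString n) → α)
    (P : Finset (BitString n)) : PMF (BitString n) :=
  if h : P.Nonempty then
    haveI : Nonempty {x // x ∈ P} := h.to_subtype
    (PMF.uniformOfFintype (Fin P.card → {x // x ∈ P})).bind fun g =>
      PMF.uniformOfFinset
        ((Finset.univ.image fun i => ((g i : {x // x ∈ P}) : BitString n)).filter fun x =>
          ∀ y ∈ Finset.univ.image fun i => ((g i : {x // x ∈ P}) : BitString n), c y P ≤ c x P)
        (by
          have hne : (Finset.univ.image fun i => ((g i : {x // x ∈ P}) : BitString n)).Nonempty := by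
            refine ⟨(g ⟨0, Finset.card_pos.mpr h⟩ : {x // x ∈ P}), ?_⟩
            exact Finset.mem_image.mpr ⟨⟨0, Finset.card_pos.mpr h⟩, Finset.mem_univ _, rfl⟩
          obtain ⟨b, hb, hmax⟩ :=
            Finset.exists_max_image _ (fun x => c x P) hne
          exact ⟨b, Finset.mem_filter.mpr ⟨hb, hmax⟩⟩)
  else PMF.pure (defaultBS n)

/-- Exponential ranking scheme: probability of selecting the `i`-th ranked individual
(1-indexed) in a population of size `μ`. -/
def rExp (i μ : ℕ) : ℝ≥0∞ :=
  (2 : ℝ≥0∞)⁻¹ ^ i / ∑ j ∈ Finset.Icc 1 μ, (2 : ℝ≥0∞)⁻¹ ^ j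

/-- Power-law ranking scheme. -/
def rPow (i μ : ℕ) : ℝ≥0∞ :=
  ((i : ℝ≥0∞) ^ 2)⁻¹ / ∑ j ∈ Finset.Icc 1 μ, ((j : ℝ≥0∞) ^ 2)⁻¹

/-- Harmonic ranking scheme. -/
def rHarm (i μ : ℕ) : ℝ≥0∞ :=
  (i : ℝ≥0∞)⁻¹ / ∑ j ∈ Finset.Icc 1 μ, (j : ℝ≥0∞)⁻¹


/-- `select` implements a rank-based parent-selection scheme with rank probabilities
`r i μ` (1-indexed rank `i`, population size `μ`) with respect to the diversity
contribution `c`, for some non-increasing ordering of the population by `c`. -/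
def implementsRankScheme {n : ℕ} {α : Type*} [Preorder α]
    (c : BitString n → Finset (BitString n) → α) (r : ℕ → ℕ → ℝ≥0∞)
    (select : Finset (BitString n) → PMF (BitString n)) : Prop :=
  ∀ P : Finset (BitString n), P.Nonempty →
    ∃ l : List (BitString n), l.Nodup ∧ l.toFinset = P ∧
      l.Chain' (fun a b => c b P ≤ c a P) ∧
      (∀ i : Fin l.length, select P (l.get i) = r (i.val + 1) P.card) ∧
      (∀ x : BitString n, x ∉ P → select P x = 0)

/-- The Pareto-optimal point `1^i 0^(n-i)` of LOTZ. -/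
def opt (n i : ℕ) : BitString n := fun t => decide ((t : ℕ) < i)

/-- The whole Pareto set of LOTZ as a population. -/
def frontSet (n : ℕ) : Finset (BitString n) := (Finset.range (n + 1)).image (opt n)

/-- `P` has a gap at position `i`. -/
def hasGapAt {n : ℕ} (P : Finset (BitString n)) (i : ℕ) : Prop :=
  opt n i ∉ P ∧ (∃ j, j < i ∧ opt n j ∈ P) ∧ (∃ k, i < k ∧ k ≤ n ∧ opt n k ∈ P)

/-- `P` has a gap at some position `i` with `n/4 ≤ i ≤ 3n/4`. -/
def gapInRange (n : ℕ) (P : Finset (BitString n)) : Prop :=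
  ∃ i : ℕ, n ≤ 4 * i ∧ 4 * i ≤ 3 * n ∧ hasGapAt P i

/-- `P` contains both `0^n` and `1^n`. -/
def bothExtremes (n : ℕ) (P : Finset (BitString n)) : Prop :=
  allZeros n ∈ P ∧ allOnes n ∈ P

/-- The chain stopped (frozen) as soon as `cond` holds. -/
def stopWhen {S : Type*} (cond : S → Prop) (st : S → PMF S) (s : S) : PMF S :=
  if cond s then PMF.pure s else st s

/-! Every bit string is Pareto-optimal for OneMinMax, so the population never loses an objective
value. Weight each value `v` not yet covered by `1/(v+1) + 1/(n-v+1)` and take as potential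
`(c p)⁻¹` times the total weight of the uncovered values, where `c` bounds from below the
probability that mutation produces a prescribed Hamming neighbour (`1/n` for SEMO and
`(1-1/n)^(n-1)/n ≥ 1/(3n)` for GSEMO). A good parent has a neighbour with an uncovered value `v`,
and it reaches `v` by flipping any one of the `v+1` (or `n-v+1`) bits counted in the weight of `v`;
so an iteration that selects it removes weight at least `c` in expectation, and as long as the
front is not covered every iteration decreases the potential by at least `1` in expectation.
Additive drift bounds the runtime by the initial potential, at most `(c p)⁻¹` times twice a
harmonic number. -/

section Expectation

variable {α β : Type*}

def expect (m : PMF α) (g : α → ℝ≥0∞) : ℝ≥0∞ := ∑' a, m a * g a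

lemma expect_bind (m : PMF α) (f : α → PMF β) (g : β → ℝ≥0∞) :
    expect (m.bind f) g = expect m fun a => expect (f a) g := by
  simp only [expect, PMF.bind_apply, ← ENNReal.tsum_mul_right, ← ENNReal.tsum_mul_left, mul_assoc]
  exact ENNReal.tsum_comm

lemma expect_pure (a : α) (g : α → ℝ≥0∞) : expect (PMF.pure a) g = g a := by
  rw [expect, tsum_eq_single a fun b hb => by simp [PMF.pure_apply, hb]]
  simp

lemma expect_map (m : PMF α) (φ : α → β) (g : β → ℝ≥0∞) :
    expect (m.map φ) g = expect m (g ∘ φ) := by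
  simp only [PMF.map, expect_bind, Function.comp_apply, expect_pure]
  rfl

lemma expect_const (m : PMF α) (c : ℝ≥0∞) : expect m (fun _ => c) = c := by
  rw [expect, ENNReal.tsum_mul_right, PMF.tsum_coe, one_mul]

lemma expect_mono (m : PMF α) {g h : α → ℝ≥0∞} (hgh : ∀ a ∈ m.support, g a ≤ h a) :
    expect m g ≤ expect m h := by
  refine ENNReal.tsum_le_tsum fun a => ?_
  by_cases ha : a ∈ m.support
  · exact mul_le_mul_right (hgh a ha) _
  · simp [(PMF.mem_support_iff m a).not_left.mp ha]

lemma expect_le_of_le (m : PMF α) {g : α → ℝ≥0∞} {C : ℝ≥0∞} (hg : ∀ a ∈ m.support, g a ≤ C) :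
    expect m g ≤ C :=
  (expect_mono m hg).trans_eq (expect_const m C)

lemma expect_add (m : PMF α) (g h : α → ℝ≥0∞) :
    expect m (fun a => g a + h a) = expect m g + expect m h := by
  simp only [expect, mul_add, ENNReal.tsum_add]

lemma expect_const_mul (m : PMF α) (c : ℝ≥0∞) (g : α → ℝ≥0∞) :
    expect m (fun a => c * g a) = c * expect m g := by
  simp only [expect, ← ENNReal.tsum_mul_left, mul_left_comm]

lemma toOuterMeasure_eq_expect (m : PMF α) (S : Set α) :
    m.toOuterMeasure S = expect m (S.indicator 1) := by
  rw [PMF.toOuterMeasure_apply, expect]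
  congr 1 with a
  by_cases ha : a ∈ S <;> simp [ha]

lemma expect_add_mul_toOuterMeasure_le (m : PMF α) (g : α → ℝ≥0∞) (S : Set α) {b C : ℝ≥0∞}
    (h : ∀ a, g a + b * S.indicator 1 a ≤ C) : expect m g + b * m.toOuterMeasure S ≤ C := by
  rw [toOuterMeasure_eq_expect, ← expect_const_mul, ← expect_add]
  exact expect_le_of_le m fun a _ => h a

end Expectation

section Drift

variable {S : Type*} (init : PMF S) (st : S → PMF S)

lemma mem_support_stateDist {I : S → Prop} (hinit : ∀ s ∈ init.support, I s)
    (hstep : ∀ s, I s → ∀ s' ∈ (st s).support, I s') :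
    ∀ t, ∀ s ∈ (stateDist init st t).support, I s
  | 0 => hinit
  | t + 1 => fun s hs => by
    obtain ⟨a, ha, hsa⟩ := (PMF.mem_support_bind_iff _ _ _).mp hs
    exact hstep a (mem_support_stateDist hinit hstep t a ha) s hsa

theorem expectedRuntime_le_of_drift (goal : S → Prop) (I : S → Prop) (Φ : S → ℝ≥0∞)
    (hinit : ∀ s ∈ init.support, I s) (hstep : ∀ s, I s → ∀ s' ∈ (st s).support, I s')
    (hdrift : ∀ s, I s → {s | ¬ goal s}.indicator 1 s + expect (st s) Φ ≤ Φ s) :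
    expectedRuntime init st goal ≤ expect init Φ := by
  set D := stateDist init st
  have hone : ∀ t, (D t).toOuterMeasure {s | ¬ goal s} + expect (D (t + 1)) Φ
      ≤ expect (D t) Φ := fun t => by
    rw [toOuterMeasure_eq_expect, show D (t + 1) = (D t).bind st from rfl, expect_bind,
      ← expect_add]
    exact expect_mono _ fun s hs => hdrift s (mem_support_stateDist init st hinit hstep t s hs)
  have htel : ∀ T, ∑ t ∈ Finset.range T, (D t).toOuterMeasure {s | ¬ goal s}
      + expect (D T) Φ ≤ expect init Φ := fun T => by
    induction T with
    | zero => simp [D, stateDist]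
    | succ T ih =>
      rw [Finset.sum_range_succ, add_assoc]
      exact (add_le_add_right (hone T) _).trans ih
  exact ENNReal.tsum_le_of_sum_range_le fun T => le_self_add.trans (htel T)

end Drift

section OneMinMax

open Finset

variable {n : ℕ}

lemma not_dominates_oneMinMax (y x : BitString n) : ¬ dominates OneMinMax y x := by
  rintro ⟨h₁, h₂, hne⟩
  simp only [OneMinMax, ne_eq, Prod.mk.injEq] at h₁ h₂ hne
  omega

lemma mutuallyNonDominated_oneMinMax (P : Finset (BitString n)) :
    mutuallyNonDominated OneMinMax P :=
  fun x _ y _ => not_dominates_oneMinMax y x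

lemma oneMinMax_eq_iff {x y : BitString n} :
    OneMinMax x = OneMinMax y ↔ onesCount x = onesCount y := by
  simp only [OneMinMax, Prod.mk.injEq]
  omega

lemma updatePop_oneMinMax (P : Finset (BitString n)) (s' : BitString n) :
    updatePop OneMinMax P s' = insert s' (P.filter fun z => onesCount z ≠ onesCount s') := by
  rw [updatePop, if_neg fun ⟨z, _, hz⟩ => not_dominates_oneMinMax z s' hz]
  congr 1
  refine filter_congr fun z _ => ?_
  simp only [weaklyDominates, OneMinMax]
  omega

lemma image_onesCount_updatePop (P : Finset (BitString n)) (s' : BitString n) :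
    (updatePop OneMinMax P s').image onesCount = insert (onesCount s') (P.image onesCount) := by
  ext v
  simp only [updatePop_oneMinMax, image_insert, mem_insert, mem_image, mem_filter]
  constructor
  · rintro (h | ⟨z, ⟨hz, -⟩, rfl⟩)
    exacts [Or.inl h, Or.inr ⟨z, hz, rfl⟩]
  · rintro (h | ⟨z, hz, rfl⟩)
    · exact Or.inl h
    · by_cases hzs : onesCount z = onesCount s'
      exacts [Or.inl hzs, Or.inr ⟨z, ⟨hz, hzs⟩, rfl⟩]

lemma onesCount_le (x : BitString n) : onesCount x ≤ n :=
  (card_filter_le _ _).trans_eq (card_fin n)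

lemma flipBit_apply (x : BitString n) (i j : Fin n) :
    flipBit x i j = if j = i then !x i else x j :=
  Function.update_apply ..

lemma onesCount_flipBit_add_one {x : BitString n} {i : Fin n} (h : x i = true) :
    onesCount (flipBit x i) + 1 = onesCount x := by
  have hset : univ.filter (fun j => flipBit x i j = true)
      = (univ.filter fun j => x j = true).erase i := by
    ext j
    by_cases hji : j = i
    · simp [flipBit_apply, hji, h]
    · simp [flipBit_apply, hji]
  rw [onesCount, onesCount, hset, card_erase_add_one (by simpa using h)]

lemma onesCount_flipBit_eq_add_one {x : BitString n} {i : Fin n} (h : x i = false) :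
    onesCount (flipBit x i) = onesCount x + 1 := by
  have hset : univ.filter (fun j => flipBit x i j = true)
      = insert i (univ.filter fun j => x j = true) := by
    ext j
    by_cases hji : j = i
    · simp [flipBit_apply, hji, h]
    · simp [flipBit_apply, hji]
  rw [onesCount, onesCount, hset, card_insert_of_notMem (by simpa using h)]

def missingValues (P : Finset (BitString n)) : Finset ℕ :=
  range (n + 1) \ P.image onesCount

lemma missingValues_updatePop (P : Finset (BitString n)) (s' : BitString n) :
    missingValues (updatePop OneMinMax P s') = (missingValues P).erase (onesCount s') := by
  rw [missingValues, image_onesCount_updatePop, sdiff_insert, missingValues]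

lemma exists_onesCount_flipBit_mem_missingValues {P : Finset (BitString n)} {x : BitString n}
    (hx : isGood OneMinMax P x) : ∃ i, onesCount (flipBit x i) ∈ missingValues P := by
  obtain ⟨-, -, ⟨i, rfl⟩, -, hnew⟩ := hx
  refine ⟨i, mem_sdiff.mpr ⟨mem_range.mpr (Nat.lt_succ_of_le (onesCount_le _)), ?_⟩⟩
  intro hi
  obtain ⟨z, hz, hzi⟩ := mem_image.mp hi
  exact hnew z hz (oneMinMax_eq_iff.mpr hzi)

end OneMinMax

section Weight

open Finset

variable {n : ℕ}

/-- A parent with `v + 1` one-bits, resp. `v - 1` one-bits, reaches the value `v` by flipping any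
one of `v + 1`, resp. `n - v + 1`, bits; the weight of `v` is the reciprocal of either count. -/
def frontWeight (n v : ℕ) : ℝ≥0∞ := ((v + 1 : ℕ) : ℝ≥0∞)⁻¹ + ((n - v + 1 : ℕ) : ℝ≥0∞)⁻¹

lemma card_filter_eq_false (x : BitString n) :
    #(univ.filter fun j => x j = false) = n - onesCount x := by
  have h := card_filter_add_card_filter_not (s := univ) fun j => x j = true
  simp only [Bool.not_eq_true, card_univ, Fintype.card_fin] at h
  rw [onesCount]
  omega

lemma filter_onesCount_flipBit_eq (x : BitString n) (i : Fin n) :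
    univ.filter (fun j => onesCount (flipBit x j) = onesCount (flipBit x i))
      = univ.filter fun j => x j = x i := by
  have hflip : ∀ k, (x k = true → onesCount (flipBit x k) + 1 = onesCount x) ∧
      (x k = false → onesCount (flipBit x k) = onesCount x + 1) :=
    fun k => ⟨onesCount_flipBit_add_one, onesCount_flipBit_eq_add_one⟩
  ext j
  have hi := hflip i
  have hj := hflip j
  simp only [mem_filter, mem_univ, true_and]
  cases hxi : x i <;> cases hxj : x j <;>
    simp only [hxi, hxj, reduceCtorEq, true_implies, false_implies, and_true, true_and,
      iff_true, iff_false] at hi hj ⊢ <;> omega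

lemma one_le_natCast_mul_inv {k : ℕ} {a : ℝ≥0∞} (hk : k ≠ 0) (ha : (k : ℝ≥0∞)⁻¹ ≤ a) :
    1 ≤ (k : ℝ≥0∞) * a :=
  (ENNReal.mul_inv_cancel (by exact_mod_cast hk) (ENNReal.natCast_ne_top k)).symm.trans_le
    (mul_le_mul_right ha _)

lemma one_le_card_mul_frontWeight (x : BitString n) (i : Fin n) :
    1 ≤ (#(univ.filter fun j => onesCount (flipBit x j) = onesCount (flipBit x i)) : ℝ≥0∞)
      * frontWeight n (onesCount (flipBit x i)) := by
  rw [filter_onesCount_flipBit_eq]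
  cases hi : x i
  · have hv := onesCount_flipBit_eq_add_one hi
    have hle := onesCount_le (flipBit x i)
    rw [card_filter_eq_false, show n - onesCount x = n - onesCount (flipBit x i) + 1 by omega]
    exact one_le_natCast_mul_inv (Nat.succ_ne_zero _) le_add_self
  · rw [← onesCount, ← onesCount_flipBit_add_one hi]
    exact one_le_natCast_mul_inv (Nat.succ_ne_zero _) le_self_add

end Weight

section Mutation

open Finset

variable {n : ℕ}

def HitsNeighbours (c : ℝ≥0∞) (mutate : BitString n → PMF (BitString n)) : Prop :=
  ∀ x i, c ≤ mutate x (flipBit x i)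

lemma HitsNeighbours.mono {c c' : ℝ≥0∞} {mutate : BitString n → PMF (BitString n)}
    (h : HitsNeighbours c mutate) (hc : c' ≤ c) : HitsNeighbours c' mutate :=
  fun x i => hc.trans (h x i)

lemma flipBit_injective (x : BitString n) : Function.Injective (flipBit x) := by
  intro i j hij
  by_contra hne
  have := congrFun hij i
  simp [flipBit_apply, hne] at this

lemma HitsNeighbours.card_mul_le {c : ℝ≥0∞} {mutate : BitString n → PMF (BitString n)}
    (h : HitsNeighbours c mutate) (x : BitString n) (v : ℕ) :
    (#(univ.filter fun j => onesCount (flipBit x j) = v) : ℝ≥0∞) * c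
      ≤ (mutate x).toOuterMeasure {y | onesCount y = v} := by
  set T := univ.filter fun j => onesCount (flipBit x j) = v
  calc (#T : ℝ≥0∞) * c = ∑ _j ∈ T, c := by rw [sum_const, nsmul_eq_mul]
    _ ≤ ∑ j ∈ T, mutate x (flipBit x j) := sum_le_sum fun j _ => h x j
    _ = (mutate x).toOuterMeasure ↑(T.image (flipBit x)) := by
      rw [PMF.toOuterMeasure_apply_finset, sum_image fun i _ j _ hij => flipBit_injective x hij]
    _ ≤ (mutate x).toOuterMeasure {y | onesCount y = v} := by
      refine MeasureTheory.measure_mono fun y hy => ?_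
      obtain ⟨j, hj, rfl⟩ := mem_image.mp hy
      exact (mem_filter.mp hj).2

lemma hitsNeighbours_localMutation (hn : 0 < n) :
    HitsNeighbours (n : ℝ≥0∞)⁻¹ (localMutation hn) := by
  intro x i
  have : Nonempty (Fin n) := ⟨⟨0, hn⟩⟩
  rw [localMutation, PMF.map_apply]
  refine le_trans ?_ (ENNReal.le_tsum i)
  simp

/-- Flipping exactly the bits where `y` differs from `x` is one way of turning `x` into `y`. -/
lemma prod_bitFlipCoin_le_globalMutationAux (l : List (Fin n)) (hl : l.Nodup)
    (x y : BitString n) (hxy : ∀ j ∉ l, y j = x j) :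
    (l.map fun j => bitFlipCoin n (y j != x j)).prod ≤ globalMutationAux l x y := by
  induction l generalizing x with
  | nil =>
    have : y = x := funext fun j => hxy j List.not_mem_nil
    simp [globalMutationAux, this]
  | cons i is ih =>
    obtain ⟨hi, his⟩ := List.nodup_cons.mp hl
    set x' := if y i != x i then flipBit x i else x
    have hx'_of_ne : ∀ j ≠ i, x' j = x j := fun j hj => by
      simp only [x']; split_ifs <;> simp [flipBit_apply, hj]
    have hx'y : ∀ j ∉ is, y j = x' j := fun j hj => by
      by_cases hji : j = i
      · subst hji
        simp only [x']; cases y j <;> cases hx : x j <;> simp [flipBit_apply, hx]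
      · rw [hx'_of_ne j hji]
        exact hxy j (by simp [hji, hj])
    have hmap : is.map (fun j => bitFlipCoin n (y j != x' j))
        = is.map fun j => bitFlipCoin n (y j != x j) :=
      List.map_congr_left fun j hj => by rw [hx'_of_ne j (ne_of_mem_of_not_mem hj hi)]
    calc ((i :: is).map fun j => bitFlipCoin n (y j != x j)).prod
        ≤ bitFlipCoin n (y i != x i) * globalMutationAux is x' y := by
          rw [List.map_cons, List.prod_cons, ← hmap]
          exact mul_le_mul_right (ih his x' hx'y) _
      _ ≤ globalMutationAux (i :: is) x y := by
          rw [globalMutationAux, PMF.bind_apply]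
          exact ENNReal.le_tsum (f := fun b => bitFlipCoin n b *
            globalMutationAux is (if b then flipBit x i else x) y) (y i != x i)

lemma inv_three_le_one_sub_inv_pow (m : ℕ) :
    (3 : ℝ≥0∞)⁻¹ ≤ (1 - ((m + 1 : ℕ) : ℝ≥0∞)⁻¹) ^ m := by
  rcases Nat.eq_zero_or_pos m with rfl | hm
  · simp
  have hreal : (3 : ℝ)⁻¹ ≤ (1 - ((m + 1 : ℕ) : ℝ)⁻¹) ^ m := by
    have hm' : (0 : ℝ) < m := by exact_mod_cast hm
    have hbase : 1 - ((m + 1 : ℕ) : ℝ)⁻¹ = (1 + (m : ℝ)⁻¹)⁻¹ := by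
      push_cast
      field_simp
      ring
    rw [hbase, inv_pow]
    exact inv_anti₀ (by positivity)
      (Real.one_add_inv_pow_le_exp.trans (Real.exp_one_lt_d9.trans (by norm_num)).le)
  have hcast : 1 - ((m + 1 : ℕ) : ℝ≥0∞)⁻¹ = ENNReal.ofReal (1 - ((m + 1 : ℕ) : ℝ)⁻¹) := by
    rw [ENNReal.ofReal_sub _ (by positivity), ENNReal.ofReal_one,
      ENNReal.ofReal_inv_of_pos (by positivity), ENNReal.ofReal_natCast]
  rw [hcast, ← ENNReal.ofReal_pow (by simp [inv_le_one_of_one_le₀]), ← ENNReal.ofReal_ofNat 3,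
    ← ENNReal.ofReal_inv_of_pos (by norm_num)]
  exact ENNReal.ofReal_le_ofReal hreal

lemma hitsNeighbours_globalMutation (hn : 0 < n) :
    HitsNeighbours (3 * (n : ℝ≥0∞))⁻¹ (globalMutation : BitString n → PMF (BitString n)) := by
  intro x i
  obtain ⟨m, rfl⟩ : ∃ m, n = m + 1 := ⟨n - 1, by omega⟩
  have hprod : ∏ j, bitFlipCoin (m + 1) (flipBit x i j != x j)
      = ((m + 1 : ℕ) : ℝ≥0∞)⁻¹ * (1 - ((m + 1 : ℕ) : ℝ≥0∞)⁻¹) ^ m := by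
    rw [← mul_prod_erase univ _ (mem_univ i), prod_congr rfl fun j hj => by
      rw [flipBit_apply, if_neg (ne_of_mem_erase hj), bne_self_eq_false]]
    simp [flipBit_apply, bitFlipCoin, card_erase_of_mem]
  calc (3 * ((m + 1 : ℕ) : ℝ≥0∞))⁻¹
      = ((m + 1 : ℕ) : ℝ≥0∞)⁻¹ * 3⁻¹ := by
        rw [ENNReal.mul_inv (by simp) (by simp), mul_comm]
    _ ≤ ∏ j, bitFlipCoin (m + 1) (flipBit x i j != x j) :=
        hprod ▸ mul_le_mul_right (inv_three_le_one_sub_inv_pow m) _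
    _ ≤ globalMutation x (flipBit x i) := by
      rw [Fin.prod_univ_def]
      exact prod_bitFlipCoin_le_globalMutationAux _ (List.nodup_finRange _) x _
        fun j hj => absurd (List.mem_finRange j) hj

end Mutation

section Potential

open Finset

variable {n : ℕ}

def missingWeight (P : Finset (BitString n)) : ℝ≥0∞ :=
  ∑ v ∈ missingValues P, frontWeight n v

lemma missingWeight_updatePop_le (P : Finset (BitString n)) (s' : BitString n) :
    missingWeight (updatePop OneMinMax P s') ≤ missingWeight P := by
  rw [missingWeight, missingValues_updatePop]
  exact sum_le_sum_of_subset (erase_subset _ _)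

lemma missingWeight_updatePop_add_le (P : Finset (BitString n)) {v : ℕ}
    (hv : v ∈ missingValues P) (s' : BitString n) :
    missingWeight (updatePop OneMinMax P s')
        + frontWeight n v * {y | onesCount y = v}.indicator 1 s'
      ≤ missingWeight P := by
  by_cases hs : onesCount s' = v
  · rw [Set.indicator_of_mem (by exact hs), Pi.one_apply, mul_one, missingWeight,
      missingValues_updatePop, hs, sum_erase_add _ _ hv, missingWeight]
  · rw [Set.indicator_of_notMem (by exact hs), mul_zero, add_zero]
    exact missingWeight_updatePop_le P s'

lemma expect_missingWeight_mutate_add_le {c : ℝ≥0∞} {mutate : BitString n → PMF (BitString n)}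
    (hmut : HitsNeighbours c mutate) {P : Finset (BitString n)} {x : BitString n}
    (hx : isGood OneMinMax P x) :
    expect (mutate x) (fun s' => missingWeight (updatePop OneMinMax P s')) + c
      ≤ missingWeight P := by
  obtain ⟨i, hi⟩ := exists_onesCount_flipBit_mem_missingValues hx
  set v := onesCount (flipBit x i)
  set k : ℝ≥0∞ := ((#(univ.filter fun j => onesCount (flipBit x j) = v) : ℕ) : ℝ≥0∞)
  refine le_trans (add_le_add_right ?_ _)
    (expect_add_mul_toOuterMeasure_le (mutate x) _ _ (missingWeight_updatePop_add_le P hi))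
  calc c = 1 * c := (one_mul c).symm
    _ ≤ k * frontWeight n v * c := mul_le_mul_left (one_le_card_mul_frontWeight x i) c
    _ = frontWeight n v * (k * c) := by ring
    _ ≤ frontWeight n v * (mutate x).toOuterMeasure {y | onesCount y = v} :=
      mul_le_mul_right (hmut.card_mul_le x v) _

variable (select : Finset (BitString n) → PMF (BitString n))
  (mutate : BitString n → PMF (BitString n)) (P : Finset (BitString n))

lemma expect_missingWeight_step_le :
    expect (step OneMinMax select mutate P) missingWeight ≤ missingWeight P := by
  rw [step, expect_bind]
  refine expect_le_of_le _ fun s _ => ?_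
  rw [expect_map]
  exact expect_le_of_le _ fun s' _ => missingWeight_updatePop_le P s'

lemma expect_missingWeight_step_add_le {c p : ℝ≥0∞} (hmut : HitsNeighbours c mutate)
    (hsel : p ≤ (select P).toOuterMeasure {x | isGood OneMinMax P x}) :
    expect (step OneMinMax select mutate P) missingWeight + c * p ≤ missingWeight P := by
  rw [step, expect_bind]
  simp only [expect_map]
  refine le_trans (add_le_add_right (mul_le_mul_right hsel c) _)
    (expect_add_mul_toOuterMeasure_le _ _ _ fun s => ?_)
  by_cases hs : isGood OneMinMax P s
  · rw [Set.indicator_of_mem (by exact hs), Pi.one_apply, mul_one]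
    exact expect_missingWeight_mutate_add_le hmut hs
  · rw [Set.indicator_of_notMem (by exact hs), mul_zero, add_zero]
    exact expect_le_of_le _ fun s' _ => missingWeight_updatePop_le P s'

end Potential

open Finset in
theorem expectedRuntime_le_of_hitsNeighbours {n : ℕ} {c p : ℝ≥0∞} (hc0 : c ≠ 0) (hct : c ≠ ⊤)
    (hp0 : p ≠ 0) (hpt : p ≠ ⊤) (select : Finset (BitString n) → PMF (BitString n))
    (hsel : ∀ P : Finset (BitString n), P.Nonempty → ¬ coversFront OneMinMax P →
      p ≤ (select P).toOuterMeasure {x | isGood OneMinMax P x})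
    (mutate : BitString n → PMF (BitString n)) (hmut : HitsNeighbours c mutate) :
    expectedRuntime (initDist n) (step OneMinMax select mutate) (coversFront OneMinMax)
      ≤ (c * p)⁻¹ * ∑ v ∈ range (n + 1), frontWeight n v := by
  have hcp : (c * p)⁻¹ * (c * p) = 1 :=
    ENNReal.inv_mul_cancel (mul_ne_zero hc0 hp0) (ENNReal.mul_ne_top hct hpt)
  refine (expectedRuntime_le_of_drift _ _ _ Finset.Nonempty
    (fun P => (c * p)⁻¹ * missingWeight P) ?_ ?_ ?_).trans ?_
  · intro P hP
    obtain ⟨x, -, rfl⟩ := (PMF.mem_support_map_iff _ _ _).mp hP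
    exact singleton_nonempty x
  · intro P _ Q hQ
    obtain ⟨s, -, hs⟩ := (PMF.mem_support_bind_iff _ _ _).mp hQ
    obtain ⟨s', -, rfl⟩ := (PMF.mem_support_map_iff _ _ _).mp hs
    rw [updatePop_oneMinMax]
    exact insert_nonempty _ _
  · intro P hP
    rw [expect_const_mul]
    by_cases hcov : coversFront OneMinMax P
    · rw [Set.indicator_of_notMem (by simpa using hcov), zero_add]
      exact mul_le_mul_right (expect_missingWeight_step_le select mutate P) _
    · rw [Set.indicator_of_mem (by exact hcov), Pi.one_apply, ← hcp, ← mul_add, add_comm]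
      exact mul_le_mul_right (expect_missingWeight_step_add_le select mutate P hmut
        (hsel P hP hcov)) _
  · exact expect_le_of_le _ fun P _ => mul_le_mul_right (sum_le_sum_of_subset sdiff_subset) _

open Finset in
lemma sum_frontWeight_le {n : ℕ} (hn : 0 < n) :
    ∑ v ∈ range (n + 1), frontWeight n v ≤ ENNReal.ofReal (4 * (Real.log n + 1)) := by
  have hsymm : ∑ v ∈ range (n + 1), frontWeight n v
      = 2 * ∑ v ∈ range (n + 1), ((v + 1 : ℕ) : ℝ≥0∞)⁻¹ := by
    have hreflect := sum_range_reflect (fun v => ((v + 1 : ℕ) : ℝ≥0∞)⁻¹) (n + 1)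
    simp only [Nat.add_sub_cancel] at hreflect
    simp only [frontWeight, sum_add_distrib, hreflect, two_mul]
  have hharmonic : ∑ v ∈ range (n + 1), ((v + 1 : ℕ) : ℝ≥0∞)⁻¹
      = ENNReal.ofReal (harmonic (n + 1)) := by
    rw [harmonic, Rat.cast_sum, ENNReal.ofReal_sum_of_nonneg fun v _ => by positivity]
    refine sum_congr rfl fun v _ => ?_
    rw [Rat.cast_inv, Rat.cast_natCast, ENNReal.ofReal_inv_of_pos (by positivity),
      ENNReal.ofReal_natCast]
  have hlog : (harmonic (n + 1) : ℝ) ≤ 2 * (Real.log n + 1) := by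
    have hn' : (1 : ℝ) ≤ n := by exact_mod_cast hn
    have hsucc : Real.log (n + 1) ≤ Real.log n + 1 := by
      have := Real.log_le_sub_one_of_pos (by positivity : (0 : ℝ) < (n + 1) / n)
      rw [Real.log_div (by positivity) (by positivity)] at this
      have : ((n : ℝ) + 1) / n - 1 ≤ 1 := by
        rw [div_sub_one (by positivity), div_le_one (by positivity)]
        linarith
      linarith
    have := harmonic_le_one_add_log (n + 1)
    push_cast at this
    linarith [Real.log_nonneg hn']
  rw [hsymm, hharmonic, ← ENNReal.ofReal_ofNat 2, ← ENNReal.ofReal_mul (by norm_num)]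
  exact ENNReal.ofReal_le_ofReal (by linarith)

/-- For SEMO or GSEMO on OneMinMax with any parent selection (supported on
the current population) that, whenever the population does not cover the whole Pareto
front, selects a good individual with probability at least `p`, the expected number of
iterations until the population covers the whole Pareto front is at most
`O((n log n)/p)` — explicitly at most `C·n·(ln n + 1)/p` for a universal constant `C`. -/
theorem oneminmax_runtime_with_pgood :
    ∃ C : ℝ, 0 < C ∧ ∀ n : ℕ, ∀ hn : 0 < n, ∀ p : ℝ≥0∞, 0 < p → p ≤ 1 →
      ∀ select : Finset (BitString n) → PMF (BitString n),
        (∀ P : Finset (BitString n), P.Nonempty →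
          ∀ x ∈ (select P).support, x ∈ P) →
        (∀ P : Finset (BitString n), P.Nonempty → mutuallyNonDominated OneMinMax P →
          ¬ coversFront OneMinMax P →
          p ≤ (select P).toOuterMeasure {x | isGood OneMinMax P x}) →
        ∀ mutate : BitString n → PMF (BitString n),
          (mutate = localMutation hn ∨ mutate = globalMutation) →
          expectedRuntime (initDist n) (step OneMinMax select mutate)
              (coversFront OneMinMax) ≤
            ENNReal.ofReal (C * n * (Real.log n + 1)) / p := by
  refine ⟨12, by norm_num, fun n hn p hp0 hp1 select _ hsel mutate hmutate => ?_⟩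
  have hmut : HitsNeighbours (3 * (n : ℝ≥0∞))⁻¹ mutate := by
    rcases hmutate with rfl | rfl
    · exact (hitsNeighbours_localMutation hn).mono
        (ENNReal.inv_le_inv.mpr (le_mul_of_one_le_left' (by norm_num)))
    · exact hitsNeighbours_globalMutation hn
  have hn0 : (n : ℝ≥0∞) ≠ 0 := by exact_mod_cast hn.ne'
  have h3n : 3 * (n : ℝ≥0∞) ≠ ⊤ :=
    ENNReal.mul_ne_top ENNReal.ofNat_ne_top (ENNReal.natCast_ne_top n)
  have hC : ENNReal.ofReal (12 * n * (Real.log n + 1))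
      = 3 * n * ENNReal.ofReal (4 * (Real.log n + 1)) := by
    rw [show (12 : ℝ) * n * (Real.log n + 1) = 3 * n * (4 * (Real.log n + 1)) by ring,
      ENNReal.ofReal_mul (by positivity), ENNReal.ofReal_mul (by norm_num), ENNReal.ofReal_ofNat,
      ENNReal.ofReal_natCast]
  calc _ ≤ ((3 * (n : ℝ≥0∞))⁻¹ * p)⁻¹ * ∑ v ∈ Finset.range (n + 1), frontWeight n v :=
        expectedRuntime_le_of_hitsNeighbours (by simp [h3n]) (by simp [hn0]) hp0.ne'
          (ne_top_of_le_ne_top ENNReal.one_ne_top hp1) select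
          (fun P hP => hsel P hP (mutuallyNonDominated_oneMinMax P)) mutate hmut
    _ ≤ ((3 * (n : ℝ≥0∞))⁻¹ * p)⁻¹ * ENNReal.ofReal (4 * (Real.log n + 1)) :=
        mul_le_mul_right (sum_frontWeight_le hn) _
    _ = ENNReal.ofReal (12 * n * (Real.log n + 1)) / p := by
        rw [ENNReal.mul_inv (by simp [h3n]) (by simp [hn0]), inv_inv, div_eq_mul_inv, hC]
        ring

end EMO
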